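/- arXiv:2310.18717 — 3 statements merged into one kernel-verified Lean document; each statement's English description precedes it below -/
import Mathlib

section
/- For every integer d ≥ 2 and every real z with z > a_d, the Stieltjes transform of the semicircle-type law equals g_d; that is, ∫_{−a_d}^{a_d} (d/(2π(d−1)))·√(a_d² − x²) / (x − z) dx = g_d(z). -/
/-!
Put `w = √(z² - a²)`. With `x = a sin θ` and `t = tan (θ / 2)`, the function
`F(x) = √(a² - x²) - z arcsin (x / a) + 2w arctan ((z t - a) / w)` is a primitive of
`√(a² - x²) / (x - z)` on `(-a, a)`. At `x = ±a` we have `t = ±1`, and since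
`(z - a)(z + a) = w²` the two arctangents sum to `π / 2`; hence the integral is `π (w - z)`.
Scaling by the density constant and inserting `a_d² = 4(d - 1)/d` gives `g_d(z)`.
-/

/-- The edge of the support: `a_d = 2 √((d-1)/d)`. -/
noncomputable def aEdge (d : ℕ) : ℝ := 2 * Real.sqrt (((d : ℝ) - 1) / d)

/-- Stieltjes transform `g_d(z) = (-dz + d√(z² - 4(d-1)/d)) / (2(d-1))`. -/
noncomputable def gd (d : ℕ) (z : ℝ) : ℝ :=
  (-(d : ℝ) * z + (d : ℝ) * Real.sqrt (z ^ 2 - 4 * ((d : ℝ) - 1) / d)) / (2 * ((d : ℝ) - 1))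

open Real Set MeasureTheory

lemma hasDerivAt_sqrt_sq_sub_sq {a x : ℝ} (hx : x ^ 2 < a ^ 2) :
    HasDerivAt (fun y => √(a ^ 2 - y ^ 2)) (-x / √(a ^ 2 - x ^ 2)) x := by
  have h := ((hasDerivAt_pow 2 x).const_sub (a ^ 2)).sqrt (sub_pos.2 hx).ne'
  convert h using 1
  have hs : √(a ^ 2 - x ^ 2) ≠ 0 := (sqrt_pos.2 (sub_pos.2 hx)).ne'
  field_simp
  ring_nf

lemma hasDerivAt_arcsin_div {a x : ℝ} (ha : 0 < a) (hx : x ^ 2 < a ^ 2) :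
    HasDerivAt (fun y => arcsin (y / a)) (1 / √(a ^ 2 - x ^ 2)) x := by
  have hlt : |x / a| < 1 := by
    rw [abs_div, abs_of_pos ha, div_lt_one ha]
    exact abs_lt_of_sq_lt_sq hx ha.le
  have hdiv : HasDerivAt (fun y => y / a) (1 / a) x := (hasDerivAt_id' x).div_const a
  have h := (hasDerivAt_arcsin (abs_lt.1 hlt).1.ne' (abs_lt.1 hlt).2.ne).comp x hdiv
  have hsqrt : √(1 - (x / a) ^ 2) = √(a ^ 2 - x ^ 2) / a := by
    rw [show 1 - (x / a) ^ 2 = (a ^ 2 - x ^ 2) / a ^ 2 by field_simp,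
      sqrt_div' _ (sq_nonneg a), sqrt_sq ha.le]
  refine h.congr_deriv ?_
  have hs : √(a ^ 2 - x ^ 2) ≠ 0 := (sqrt_pos.2 (sub_pos.2 hx)).ne'
  rw [hsqrt]
  field_simp

/-- `tan (θ / 2)` for `x = a sin θ`, `θ ∈ [-π/2, π/2]`. -/
noncomputable def halfAngleTan (a x : ℝ) : ℝ := x / (a + √(a ^ 2 - x ^ 2))

section halfAngleTan

variable {a : ℝ}

lemma halfAngleTan_self (ha : 0 < a) : halfAngleTan a a = 1 := by
  simp [halfAngleTan, ha.ne']

lemma halfAngleTan_neg_self (ha : 0 < a) : halfAngleTan a (-a) = -1 := by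
  simp [halfAngleTan, ha.ne']

@[fun_prop]
lemma continuous_halfAngleTan (ha : 0 < a) : Continuous (halfAngleTan a) :=
  continuous_id.div (continuous_const.add (continuous_const.sub (continuous_pow 2)).sqrt)
    fun _ => (add_pos_of_pos_of_nonneg ha (sqrt_nonneg _)).ne'

lemma one_add_halfAngleTan_sq (ha : 0 < a) {x : ℝ} (hx : x ^ 2 ≤ a ^ 2) :
    1 + halfAngleTan a x ^ 2 = 2 * a / (a + √(a ^ 2 - x ^ 2)) := by
  have hs := sq_sqrt (sub_nonneg.2 hx)
  have hpos : 0 < a + √(a ^ 2 - x ^ 2) := add_pos_of_pos_of_nonneg ha (sqrt_nonneg _)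
  rw [halfAngleTan]
  field_simp
  linear_combination hs

lemma hasDerivAt_halfAngleTan (ha : 0 < a) {x : ℝ} (hx : x ^ 2 < a ^ 2) :
    HasDerivAt (halfAngleTan a)
      (a / (√(a ^ 2 - x ^ 2) * (a + √(a ^ 2 - x ^ 2)))) x := by
  have hs := sq_sqrt (sub_pos.2 hx).le
  have hspos : 0 < √(a ^ 2 - x ^ 2) := sqrt_pos.2 (sub_pos.2 hx)
  have hpos : 0 < a + √(a ^ 2 - x ^ 2) := by positivity
  have h := (hasDerivAt_id' x).div ((hasDerivAt_sqrt_sq_sub_sq hx).const_add a) hpos.ne'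
  refine h.congr_deriv ?_
  field_simp
  linear_combination hs

end halfAngleTan

lemma hasDerivAt_arctan_halfAngleTan {a z x : ℝ} (ha : 0 < a) (hz : a < z) (hx : x ^ 2 < a ^ 2) :
    HasDerivAt (fun y => arctan ((z * halfAngleTan a y - a) / √(z ^ 2 - a ^ 2)))
      (√(z ^ 2 - a ^ 2) / (2 * √(a ^ 2 - x ^ 2) * (z - x))) x := by
  have h := ((((hasDerivAt_halfAngleTan ha hx).const_mul z).sub_const a).div_const
    √(z ^ 2 - a ^ 2)).arctan
  set s := √(a ^ 2 - x ^ 2)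
  set w := √(z ^ 2 - a ^ 2)
  set t := halfAngleTan a x
  have hs : 0 < s := sqrt_pos.2 (sub_pos.2 hx)
  have hw2 : w ^ 2 = z ^ 2 - a ^ 2 := sq_sqrt (by nlinarith)
  have hw : 0 < w := sqrt_pos.2 (by nlinarith)
  have hpos : 0 < a + s := by positivity
  have hz0 : 0 < z := ha.trans hz
  have ht : t * (a + s) = x := div_mul_cancel₀ _ hpos.ne'
  have h1t : (1 + t ^ 2) * (a + s) = 2 * a := by
    rw [one_add_halfAngleTan_sq ha hx.le, div_mul_cancel₀ _ hpos.ne']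
  have hden : w ^ 2 + (z * t - a) ^ 2 = 2 * a * z * (z - x) / (a + s) := by
    rw [eq_div_iff hpos.ne', ← ht]
    linear_combination (a + s) * hw2 + z ^ 2 * h1t
  refine h.congr_deriv ?_
  rw [div_pow, one_add_div (by positivity), hden]
  field_simp

lemma arctan_add_arctan_of_mul_eq_one {x y : ℝ} (hx : 0 < x) (hxy : x * y = 1) :
    arctan x + arctan y = π / 2 := by
  rw [eq_inv_of_mul_eq_one_right hxy, arctan_inv_of_pos hx]
  ring

noncomputable def semicircleStieltjesPrimitive (a z x : ℝ) : ℝ :=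
  √(a ^ 2 - x ^ 2) - z * arcsin (x / a)
    + 2 * √(z ^ 2 - a ^ 2) * arctan ((z * halfAngleTan a x - a) / √(z ^ 2 - a ^ 2))

section semicircleStieltjesPrimitive

variable {a z : ℝ}

lemma continuous_semicircleStieltjesPrimitive (ha : 0 < a) :
    Continuous (semicircleStieltjesPrimitive a z) := by
  unfold semicircleStieltjesPrimitive
  fun_prop (disch := exact ha.ne')

lemma hasDerivAt_semicircleStieltjesPrimitive (ha : 0 < a) (hz : a < z) {x : ℝ}
    (hx : x ^ 2 < a ^ 2) :
    HasDerivAt (semicircleStieltjesPrimitive a z) (√(a ^ 2 - x ^ 2) / (x - z)) x := by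
  have h := ((hasDerivAt_sqrt_sq_sub_sq hx).sub ((hasDerivAt_arcsin_div ha hx).const_mul z)).add
    ((hasDerivAt_arctan_halfAngleTan ha hz hx).const_mul (2 * √(z ^ 2 - a ^ 2)))
  refine h.congr_deriv ?_
  have hs : 0 < √(a ^ 2 - x ^ 2) := sqrt_pos.2 (sub_pos.2 hx)
  have hs2 := sq_sqrt (sub_pos.2 hx).le
  have hw2 : √(z ^ 2 - a ^ 2) ^ 2 = z ^ 2 - a ^ 2 := sq_sqrt (by nlinarith)
  have hzx : 0 < z - x := by nlinarith [abs_lt_of_sq_lt_sq' hx ha.le]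
  have hxz : x - z ≠ 0 := by linarith
  field_simp
  linear_combination (x - z) * hs2 + (x - z) * hw2

lemma semicircleStieltjesPrimitive_sub (ha : 0 < a) (hz : a < z) :
    semicircleStieltjesPrimitive a z a - semicircleStieltjesPrimitive a z (-a)
      = π * (√(z ^ 2 - a ^ 2) - z) := by
  have hw : 0 < √(z ^ 2 - a ^ 2) := sqrt_pos.2 (by nlinarith)
  have hw2 : √(z ^ 2 - a ^ 2) ^ 2 = z ^ 2 - a ^ 2 := sq_sqrt (by nlinarith)
  have harctan : arctan ((z - a) / √(z ^ 2 - a ^ 2)) + arctan ((z + a) / √(z ^ 2 - a ^ 2))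
      = π / 2 := by
    refine arctan_add_arctan_of_mul_eq_one (div_pos (by linarith) hw) ?_
    field_simp
    linear_combination -hw2
  simp only [semicircleStieltjesPrimitive, halfAngleTan_self ha, halfAngleTan_neg_self ha,
    div_self ha.ne', neg_div, arcsin_one, arcsin_neg, neg_sq, sub_self, sqrt_zero, mul_one,
    show z * -1 - a = -(z + a) by ring, arctan_neg]
  linear_combination 2 * √(z ^ 2 - a ^ 2) * harctan

end semicircleStieltjesPrimitive

theorem integral_sqrt_sq_sub_sq_div_sub {a z : ℝ} (ha : 0 < a) (hz : a < z) :
    ∫ x in (-a)..a, √(a ^ 2 - x ^ 2) / (x - z) = π * (√(z ^ 2 - a ^ 2) - z) := by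
  have hint : IntervalIntegrable (fun x => √(a ^ 2 - x ^ 2) / (x - z)) volume (-a) a := by
    refine (ContinuousOn.div (by fun_prop) (by fun_prop) fun x hx => ?_).intervalIntegrable
    rw [uIcc_of_le (by linarith)] at hx
    exact sub_ne_zero.2 (hx.2.trans_lt hz).ne
  rw [intervalIntegral.integral_eq_sub_of_hasDeriv_right_of_le (by linarith)
    (continuous_semicircleStieltjesPrimitive ha).continuousOn
    (fun x hx => (hasDerivAt_semicircleStieltjesPrimitive ha hz
      (sq_lt_sq' hx.1 hx.2)).hasDerivWithinAt) hint]
  exact semicircleStieltjesPrimitive_sub ha hz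

lemma aEdge_sq (d : ℕ) : aEdge d ^ 2 = 4 * ((d : ℝ) - 1) / d := by
  have hnonneg : 0 ≤ ((d : ℝ) - 1) / d := by
    rcases Nat.eq_zero_or_pos d with rfl | hd
    · simp
    · exact div_nonneg (sub_nonneg.2 (by exact_mod_cast hd)) d.cast_nonneg
  rw [aEdge, mul_pow, sq_sqrt hnonneg]
  ring

lemma aEdge_pos {d : ℕ} (hd : 1 < d) : 0 < aEdge d := by
  have hd' : (1 : ℝ) < d := by exact_mod_cast hd
  exact mul_pos two_pos (sqrt_pos.2 (div_pos (by linarith) (by linarith)))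

/-- For every `d ≥ 2` and `z > a_d`, the Stieltjes transform of the semicircle-type law
with density `ρ_d(x) = (d/(2π(d−1)))·√(a_d² − x²)` on `[−a_d, a_d]` equals `g_d(z)`:
`∫_{−a_d}^{a_d} ρ_d(x)/(x − z) dx = g_d(z)`. -/
theorem semicircle_stieltjes_transform (d : ℕ) (hd : 2 ≤ d) (z : ℝ) (hz : z > aEdge d) :
    ∫ x in (-aEdge d)..(aEdge d),
      ((d : ℝ) / (2 * Real.pi * ((d : ℝ) - 1))) * Real.sqrt (aEdge d ^ 2 - x ^ 2) / (x - z)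
      = gd d z := by
  have hd' : (1 : ℝ) < d := by exact_mod_cast hd
  simp_rw [mul_div_assoc]
  rw [intervalIntegral.integral_const_mul, integral_sqrt_sq_sub_sq_div_sub (aEdge_pos hd) hz, gd,
    aEdge_sq]
  have hd1 : (d : ℝ) - 1 ≠ 0 := by linarith
  field_simp
  ring
end

section
/- Let T ∈ ℝ^{n₁×n₂×n₃} and suppose (λ, u₁, u₂, u₃), with λ ∈ ℝ and u₁, u₂, u₃ unit vectors, globally minimizes ‖T − λ'·v₁⊗v₂⊗v₃‖_F² over all λ' ∈ ℝ and unit vectors v₁, v₂, v₃. Then the singular-pair identities hold: T(·, u₂, u₃) = λ·u₁, T(u₁, ·, u₃) = λ·u₂, T(u₁, u₂, ·) = λ·u₃, and λ = T(u₁, u₂, u₃). -/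
/-!
For unit vectors `vᵢ`, `‖T - c • v₁ ⊗ v₂ ⊗ v₃‖² = ‖T‖² - 2 c T(v₁,v₂,v₃) + c²`. Minimizing over `c`
forces `λ = T(u₁,u₂,u₃)`, and then minimality says `T(v₁,v₂,v₃)² ≤ λ²` for all unit `vᵢ`.
Freezing two arguments, `T(v,u₂,u₃) = ⟪w, v⟫` with `w = T(·,u₂,u₃)`; testing `v = w / ‖w‖` gives
`‖w‖ ≤ |λ|`, while `⟪w, u₁⟫ = λ`, so `‖w - λ u₁‖² = ‖w‖² - λ² ≤ 0`. The other modes follow by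
permuting the indices of `T`.
-/

open Finset

section Vector

variable {ι : Type*} [Fintype ι]

lemma sum_sq_le_of_sum_mul_sq_le {w : ι → ℝ} {lam : ℝ}
    (hmax : ∀ v : ι → ℝ, ∑ i, v i ^ 2 = 1 → (∑ i, w i * v i) ^ 2 ≤ lam ^ 2) :
    ∑ i, w i ^ 2 ≤ lam ^ 2 := by
  set N := √(∑ i, w i ^ 2)
  have hN2 : N ^ 2 = ∑ i, w i ^ 2 := Real.sq_sqrt (sum_nonneg fun i _ => sq_nonneg _)
  rcases (show 0 ≤ N from Real.sqrt_nonneg _).eq_or_lt with hN | hN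
  · rw [← hN2, ← hN, sq, zero_mul]
    positivity
  have hunit : ∑ i, (w i / N) ^ 2 = 1 := by
    simp_rw [div_pow, ← sum_div, ← hN2]
    field_simp [hN.ne']
  have hinner : ∑ i, w i * (w i / N) = N := by
    simp_rw [mul_div_assoc', ← sq, ← sum_div, ← hN2]
    field_simp [hN.ne']
  simpa [hinner, hN2] using hmax _ hunit

/-- Equality case of Cauchy–Schwarz, in the form produced by a maximality argument. -/
lemma eq_mul_of_sum_mul_sq_le {w u : ι → ℝ} {lam : ℝ} (hu : ∑ i, u i ^ 2 = 1)
    (hwu : ∑ i, w i * u i = lam)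
    (hmax : ∀ v : ι → ℝ, ∑ i, v i ^ 2 = 1 → (∑ i, w i * v i) ^ 2 ≤ lam ^ 2) (i : ι) :
    w i = lam * u i := by
  have hdist : ∑ j, (w j - lam * u j) ^ 2 = ∑ j, w j ^ 2 - lam ^ 2 := by
    have : ∑ j, (w j - lam * u j) ^ 2
        = ∑ j, w j ^ 2 - 2 * lam * ∑ j, w j * u j + lam ^ 2 * ∑ j, u j ^ 2 := by
      simp_rw [mul_sum, ← sum_sub_distrib, ← sum_add_distrib]
      exact sum_congr rfl fun j _ => by ring
    rw [this, hwu, hu]; ring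
  have hzero : ∑ j, (w j - lam * u j) ^ 2 = 0 :=
    le_antisymm (by linarith [sum_sq_le_of_sum_mul_sq_le hmax])
      (sum_nonneg fun j _ => sq_nonneg _)
  have := (sum_eq_zero_iff_of_nonneg fun j _ => sq_nonneg (w j - lam * u j)).mp hzero i
    (mem_univ i)
  linarith [pow_eq_zero_iff two_ne_zero |>.mp this]

end Vector

section Tensor

variable {ι₁ ι₂ ι₃ : Type*} [Fintype ι₁] [Fintype ι₂] [Fintype ι₃]

def contract3 (T : ι₁ → ι₂ → ι₃ → ℝ) (v₁ : ι₁ → ℝ) (v₂ : ι₂ → ℝ) (v₃ : ι₃ → ℝ) : ℝ :=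
  ∑ p, ∑ q, ∑ r, T p q r * v₁ p * v₂ q * v₃ r

lemma contract3_eq_sum_mul (T : ι₁ → ι₂ → ι₃ → ℝ) (v₁ : ι₁ → ℝ) (v₂ : ι₂ → ℝ)
    (v₃ : ι₃ → ℝ) :
    contract3 T v₁ v₂ v₃ = ∑ p, (∑ q, ∑ r, T p q r * v₂ q * v₃ r) * v₁ p := by
  refine sum_congr rfl fun p _ => ?_
  simp_rw [sum_mul]
  exact sum_congr rfl fun q _ => sum_congr rfl fun r _ => by ring

lemma contract3_swap₁₂ (T : ι₁ → ι₂ → ι₃ → ℝ) (v₁ : ι₁ → ℝ) (v₂ : ι₂ → ℝ) (v₃ : ι₃ → ℝ) :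
    contract3 (fun q p r => T p q r) v₂ v₁ v₃ = contract3 T v₁ v₂ v₃ := by
  rw [contract3, sum_comm]
  exact sum_congr rfl fun p _ => sum_congr rfl fun q _ => sum_congr rfl fun r _ => by ring

lemma contract3_rotate (T : ι₁ → ι₂ → ι₃ → ℝ) (v₁ : ι₁ → ℝ) (v₂ : ι₂ → ℝ) (v₃ : ι₃ → ℝ) :
    contract3 (fun r p q => T p q r) v₃ v₁ v₂ = contract3 T v₁ v₂ v₃ := by
  rw [contract3, sum_comm]
  refine sum_congr rfl fun p _ => ?_
  rw [sum_comm]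
  exact sum_congr rfl fun q _ => sum_congr rfl fun r _ => by ring

lemma sum_sub_rankOne_sq (T : ι₁ → ι₂ → ι₃ → ℝ) (c : ℝ) {v₁ : ι₁ → ℝ} {v₂ : ι₂ → ℝ}
    {v₃ : ι₃ → ℝ} (h₁ : ∑ p, v₁ p ^ 2 = 1) (h₂ : ∑ q, v₂ q ^ 2 = 1) (h₃ : ∑ r, v₃ r ^ 2 = 1) :
    ∑ p, ∑ q, ∑ r, (T p q r - c * v₁ p * v₂ q * v₃ r) ^ 2
      = ∑ p, ∑ q, ∑ r, T p q r ^ 2 - 2 * c * contract3 T v₁ v₂ v₃ + c ^ 2 := by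
  have h : ∀ p q r, (T p q r - c * v₁ p * v₂ q * v₃ r) ^ 2
      = T p q r ^ 2 - 2 * c * (T p q r * v₁ p * v₂ q * v₃ r)
        + c ^ 2 * (v₁ p ^ 2 * (v₂ q ^ 2 * v₃ r ^ 2)) := fun _ _ _ => by ring
  simp_rw [contract3, h, sum_add_distrib, sum_sub_distrib, ← mul_sum, ← sum_mul, h₃, h₂, h₁,
    mul_one]

lemma contract3_of_isMin_rankOne {T : ι₁ → ι₂ → ι₃ → ℝ} {lam : ℝ} {u₁ : ι₁ → ℝ}
    {u₂ : ι₂ → ℝ} {u₃ : ι₃ → ℝ}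
    (hu₁ : ∑ p, u₁ p ^ 2 = 1) (hu₂ : ∑ q, u₂ q ^ 2 = 1) (hu₃ : ∑ r, u₃ r ^ 2 = 1)
    (hmin : ∀ (lam' : ℝ) (v₁ : ι₁ → ℝ) (v₂ : ι₂ → ℝ) (v₃ : ι₃ → ℝ),
        (∑ p, v₁ p ^ 2 = 1) → (∑ q, v₂ q ^ 2 = 1) → (∑ r, v₃ r ^ 2 = 1) →
        (∑ p, ∑ q, ∑ r, (T p q r - lam * u₁ p * u₂ q * u₃ r) ^ 2)
          ≤ ∑ p, ∑ q, ∑ r, (T p q r - lam' * v₁ p * v₂ q * v₃ r) ^ 2) :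
    lam = contract3 T u₁ u₂ u₃ ∧
      ∀ (v₁ : ι₁ → ℝ) (v₂ : ι₂ → ℝ) (v₃ : ι₃ → ℝ), ∑ p, v₁ p ^ 2 = 1 →
        ∑ q, v₂ q ^ 2 = 1 → ∑ r, v₃ r ^ 2 = 1 → contract3 T v₁ v₂ v₃ ^ 2 ≤ lam ^ 2 := by
  have hlam : lam = contract3 T u₁ u₂ u₃ := by
    have h := hmin (contract3 T u₁ u₂ u₃) u₁ u₂ u₃ hu₁ hu₂ hu₃
    rw [sum_sub_rankOne_sq T _ hu₁ hu₂ hu₃, sum_sub_rankOne_sq T _ hu₁ hu₂ hu₃] at h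
    nlinarith [sq_nonneg (lam - contract3 T u₁ u₂ u₃)]
  refine ⟨hlam, fun v₁ v₂ v₃ hv₁ hv₂ hv₃ => ?_⟩
  have h := hmin (contract3 T v₁ v₂ v₃) v₁ v₂ v₃ hv₁ hv₂ hv₃
  rw [sum_sub_rankOne_sq T _ hu₁ hu₂ hu₃, sum_sub_rankOne_sq T _ hv₁ hv₂ hv₃, ← hlam] at h
  linarith

lemma partialContract₁_eq_of_isMax {T : ι₁ → ι₂ → ι₃ → ℝ} {lam : ℝ} {u₁ : ι₁ → ℝ}
    {u₂ : ι₂ → ℝ} {u₃ : ι₃ → ℝ}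
    (hu₁ : ∑ p, u₁ p ^ 2 = 1) (hu₂ : ∑ q, u₂ q ^ 2 = 1) (hu₃ : ∑ r, u₃ r ^ 2 = 1)
    (hlam : lam = contract3 T u₁ u₂ u₃)
    (hmax : ∀ (v₁ : ι₁ → ℝ) (v₂ : ι₂ → ℝ) (v₃ : ι₃ → ℝ), ∑ p, v₁ p ^ 2 = 1 →
        ∑ q, v₂ q ^ 2 = 1 → ∑ r, v₃ r ^ 2 = 1 → contract3 T v₁ v₂ v₃ ^ 2 ≤ lam ^ 2)
    (p : ι₁) :
    ∑ q, ∑ r, T p q r * u₂ q * u₃ r = lam * u₁ p := by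
  refine eq_mul_of_sum_mul_sq_le (w := fun p => ∑ q, ∑ r, T p q r * u₂ q * u₃ r) hu₁ ?_
    (fun v hv => ?_) p
  · rw [hlam, contract3_eq_sum_mul]
  · rw [← contract3_eq_sum_mul]
    exact hmax v u₂ u₃ hv hu₂ hu₃

end Tensor

/-- If `(λ, u₁, u₂, u₃)` (with `λ ∈ ℝ` and `u₁, u₂, u₃` unit vectors) globally minimizes
`‖T − λ'·v₁⊗v₂⊗v₃‖_F²` over all `λ' ∈ ℝ` and unit vectors `v₁, v₂, v₃`, then the
singular-pair identities hold: `T(·,u₂,u₃) = λ·u₁`, `T(u₁,·,u₃) = λ·u₂`,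
`T(u₁,u₂,·) = λ·u₃`, and `λ = T(u₁,u₂,u₃)`. -/
theorem best_rank_one_singular_pair (n₁ n₂ n₃ : ℕ)
    (T : Fin n₁ → Fin n₂ → Fin n₃ → ℝ) (lam : ℝ)
    (u₁ : Fin n₁ → ℝ) (u₂ : Fin n₂ → ℝ) (u₃ : Fin n₃ → ℝ)
    (hu₁ : ∑ p, u₁ p ^ 2 = 1) (hu₂ : ∑ q, u₂ q ^ 2 = 1) (hu₃ : ∑ r, u₃ r ^ 2 = 1)
    (hmin : ∀ (lam' : ℝ) (v₁ : Fin n₁ → ℝ) (v₂ : Fin n₂ → ℝ) (v₃ : Fin n₃ → ℝ),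
        (∑ p, v₁ p ^ 2 = 1) → (∑ q, v₂ q ^ 2 = 1) → (∑ r, v₃ r ^ 2 = 1) →
        (∑ p, ∑ q, ∑ r, (T p q r - lam * u₁ p * u₂ q * u₃ r) ^ 2)
          ≤ ∑ p, ∑ q, ∑ r, (T p q r - lam' * v₁ p * v₂ q * v₃ r) ^ 2) :
    (∀ p, (∑ q, ∑ r, T p q r * u₂ q * u₃ r) = lam * u₁ p) ∧
    (∀ q, (∑ p, ∑ r, T p q r * u₁ p * u₃ r) = lam * u₂ q) ∧
    (∀ r, (∑ p, ∑ q, T p q r * u₁ p * u₂ q) = lam * u₃ r) ∧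
    lam = ∑ p, ∑ q, ∑ r, T p q r * u₁ p * u₂ q * u₃ r := by
  obtain ⟨hlam, hmax⟩ := contract3_of_isMin_rankOne hu₁ hu₂ hu₃ hmin
  refine ⟨partialContract₁_eq_of_isMax hu₁ hu₂ hu₃ hlam hmax, ?_, ?_, hlam⟩
  · refine partialContract₁_eq_of_isMax (T := fun q p r => T p q r) hu₂ hu₁ hu₃
      (by rw [contract3_swap₁₂, hlam]) fun v₂ v₁ v₃ hv₂ hv₁ hv₃ => ?_
    rw [contract3_swap₁₂]
    exact hmax v₁ v₂ v₃ hv₁ hv₂ hv₃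
  · refine partialContract₁_eq_of_isMax (T := fun r p q => T p q r) hu₃ hu₁ hu₂
      (by rw [contract3_rotate, hlam]) fun v₃ v₁ v₂ hv₃ hv₁ hv₂ => ?_
    rw [contract3_rotate]
    exact hmax v₁ v₂ v₃ hv₁ hv₂ hv₃
end

section
/- Let T ∈ ℝ^{n₁×n₂×n₃} and suppose (λ, u₁, u₂, u₃), with λ ≥ 0 and u₁, u₂, u₃ unit vectors, globally minimizes ‖T − λ'·v₁⊗v₂⊗v₃‖_F² over all λ' ∈ ℝ and unit vectors v₁, v₂, v₃. Then λ coincides with the spectral norm of T: λ = ‖T‖ = sup{ |T(v₁,v₂,v₃)| : ‖v₁‖ = ‖v₂‖ = ‖v₃‖ = 1 }. -/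
/-!
For unit vectors the squared residual of a rank-one approximation completes to
`‖T − s·v₁⊗v₂⊗v₃‖_F² = ‖T‖_F² − T(v₁,v₂,v₃)² + (s − T(v₁,v₂,v₃))²`.
Minimality in the scale `s` forces `λ = T(u₁,u₂,u₃)`, and minimality against
`(T(v₁,v₂,v₃), v₁, v₂, v₃)` then gives `T(v₁,v₂,v₃)² ≤ λ²` for all unit `v₁, v₂, v₃`,
so `λ` is the largest value of `|T(v₁,v₂,v₃)|`.
-/

open Finset

variable {ι₁ ι₂ ι₃ : Type*} [Fintype ι₁] [Fintype ι₂] [Fintype ι₃]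

lemma sum_sq_sub_mul_tprod (T : ι₁ → ι₂ → ι₃ → ℝ) (s : ℝ)
    (v₁ : ι₁ → ℝ) (v₂ : ι₂ → ℝ) (v₃ : ι₃ → ℝ) :
    ∑ p, ∑ q, ∑ r, (T p q r - s * v₁ p * v₂ q * v₃ r) ^ 2
      = ∑ p, ∑ q, ∑ r, T p q r ^ 2
        - 2 * s * ∑ p, ∑ q, ∑ r, T p q r * v₁ p * v₂ q * v₃ r
        + s ^ 2 * (∑ p, v₁ p ^ 2) * (∑ q, v₂ q ^ 2) * (∑ r, v₃ r ^ 2) := by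
  have hexpand : ∀ p q r, (T p q r - s * v₁ p * v₂ q * v₃ r) ^ 2
      = T p q r ^ 2 - 2 * s * (T p q r * v₁ p * v₂ q * v₃ r)
        + s ^ 2 * (v₁ p ^ 2 * (v₂ q ^ 2 * v₃ r ^ 2)) := fun _ _ _ => by ring
  simp only [hexpand, sum_add_distrib, sum_sub_distrib, ← mul_sum, ← sum_mul]
  ring

lemma sum_sq_sub_mul_tprod_of_sum_sq_eq_one (T : ι₁ → ι₂ → ι₃ → ℝ) (s : ℝ)
    {v₁ : ι₁ → ℝ} {v₂ : ι₂ → ℝ} {v₃ : ι₃ → ℝ}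
    (h₁ : ∑ p, v₁ p ^ 2 = 1) (h₂ : ∑ q, v₂ q ^ 2 = 1) (h₃ : ∑ r, v₃ r ^ 2 = 1) :
    ∑ p, ∑ q, ∑ r, (T p q r - s * v₁ p * v₂ q * v₃ r) ^ 2
      = ∑ p, ∑ q, ∑ r, T p q r ^ 2
        - (∑ p, ∑ q, ∑ r, T p q r * v₁ p * v₂ q * v₃ r) ^ 2
        + (s - ∑ p, ∑ q, ∑ r, T p q r * v₁ p * v₂ q * v₃ r) ^ 2 := by
  rw [sum_sq_sub_mul_tprod, h₁, h₂, h₃]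
  ring

/-- If `(λ, u₁, u₂, u₃)` (with `λ ≥ 0` and `u₁, u₂, u₃` unit vectors) globally minimizes
`‖T − λ'·v₁⊗v₂⊗v₃‖_F²` over all `λ' ∈ ℝ` and unit vectors `v₁, v₂, v₃`, then `λ`
coincides with the spectral norm of `T`:
`λ = ‖T‖ = sup { |T(v₁,v₂,v₃)| : ‖v₁‖ = ‖v₂‖ = ‖v₃‖ = 1 }`. -/
theorem best_rank_one_spectral_norm (n₁ n₂ n₃ : ℕ)
    (T : Fin n₁ → Fin n₂ → Fin n₃ → ℝ) (lam : ℝ) (hlam : 0 ≤ lam)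
    (u₁ : Fin n₁ → ℝ) (u₂ : Fin n₂ → ℝ) (u₃ : Fin n₃ → ℝ)
    (hu₁ : ∑ p, u₁ p ^ 2 = 1) (hu₂ : ∑ q, u₂ q ^ 2 = 1) (hu₃ : ∑ r, u₃ r ^ 2 = 1)
    (hmin : ∀ (lam' : ℝ) (v₁ : Fin n₁ → ℝ) (v₂ : Fin n₂ → ℝ) (v₃ : Fin n₃ → ℝ),
        (∑ p, v₁ p ^ 2 = 1) → (∑ q, v₂ q ^ 2 = 1) → (∑ r, v₃ r ^ 2 = 1) →
        (∑ p, ∑ q, ∑ r, (T p q r - lam * u₁ p * u₂ q * u₃ r) ^ 2)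
          ≤ ∑ p, ∑ q, ∑ r, (T p q r - lam' * v₁ p * v₂ q * v₃ r) ^ 2) :
    lam = sSup {x : ℝ | ∃ (v₁ : Fin n₁ → ℝ) (v₂ : Fin n₂ → ℝ) (v₃ : Fin n₃ → ℝ),
        (∑ p, v₁ p ^ 2 = 1) ∧ (∑ q, v₂ q ^ 2 = 1) ∧ (∑ r, v₃ r ^ 2 = 1) ∧
        x = |∑ p, ∑ q, ∑ r, T p q r * v₁ p * v₂ q * v₃ r|} := by
  set c := ∑ p, ∑ q, ∑ r, T p q r * u₁ p * u₂ q * u₃ r with hc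
  have hlam_eq : lam = c := by
    have h := hmin c u₁ u₂ u₃ hu₁ hu₂ hu₃
    rw [sum_sq_sub_mul_tprod_of_sum_sq_eq_one T _ hu₁ hu₂ hu₃,
      sum_sq_sub_mul_tprod_of_sum_sq_eq_one T _ hu₁ hu₂ hu₃, ← hc, sub_self] at h
    nlinarith [sq_nonneg (lam - c)]
  symm
  apply IsGreatest.csSup_eq
  refine ⟨⟨u₁, u₂, u₃, hu₁, hu₂, hu₃, by rw [← hc, ← hlam_eq, abs_of_nonneg hlam]⟩, ?_⟩
  rintro x ⟨v₁, v₂, v₃, h₁, h₂, h₃, rfl⟩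
  set d := ∑ p, ∑ q, ∑ r, T p q r * v₁ p * v₂ q * v₃ r with hd
  have h := hmin d v₁ v₂ v₃ h₁ h₂ h₃
  rw [sum_sq_sub_mul_tprod_of_sum_sq_eq_one T _ hu₁ hu₂ hu₃,
    sum_sq_sub_mul_tprod_of_sum_sq_eq_one T _ h₁ h₂ h₃,
    ← hc, ← hd, ← hlam_eq, sub_self, sub_self] at h
  exact abs_le_of_sq_le_sq (by linarith) hlam
end
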